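/- arXiv:2511.16486 — 4 statements merged into one kernel-verified Lean document; each statement's English description precedes it below -/
import Mathlib

section
/- Suppose the family of connecting operators (L_ε) is asymptotically contractive (condition (H1)). If (w^ε) converges strongly along L_ε to w ∈ X_0 and (v^ε) converges weakly along L_ε to v ∈ X_0, then the inner products converge: (w^ε, v^ε)_{X_ε} → (w, v)_{X_0} as ε → 0⁺. -/
open Filter Topology
open scoped InnerProductSpace

noncomputable section

variable {X : ℝ → Type*} [∀ ε, NormedAddCommGroup (X ε)] [∀ ε, InnerProductSpace ℝ (X ε)]
variable {X₀ : Type*} [NormedAddCommGroup X₀] [InnerProductSpace ℝ X₀]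

/-- Strong convergence of a family `w ε ∈ X ε` to `w₀ ∈ X₀` along connecting operators `L ε`. -/
def StrongAlong (L : ∀ ε : ℝ, X ε →L[ℝ] X₀) (w : ∀ ε : ℝ, X ε) (w₀ : X₀) : Prop :=
  Tendsto (fun ε => ‖w ε‖) (𝓝[>] (0:ℝ)) (𝓝 ‖w₀‖) ∧
    Tendsto (fun ε => L ε (w ε)) (𝓝[>] (0:ℝ)) (𝓝 w₀)

/-- Weak convergence of a family `w ε ∈ X ε` to `w₀ ∈ X₀` along connecting operators `L ε`:
asymptotic boundedness of the norms together with weak convergence `L ε (w ε) ⇀ w₀` in the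
Hilbert space `X₀` (tested against every `v ∈ X₀`). -/
def WeakAlong (L : ∀ ε : ℝ, X ε →L[ℝ] X₀) (w : ∀ ε : ℝ, X ε) (w₀ : X₀) : Prop :=
  (∃ C : ℝ, ∀ᶠ ε in 𝓝[>] (0:ℝ), ‖w ε‖ ≤ C) ∧
    ∀ v : X₀, Tendsto (fun ε => ⟪L ε (w ε), v⟫_ℝ) (𝓝[>] (0:ℝ)) (𝓝 ⟪w₀, v⟫_ℝ)

/-- (H1): the connecting operators are asymptotically contractive,
i.e. `limsup_{ε→0⁺} ‖L ε‖ ≤ 1`. -/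
def AsympContractive (L : ∀ ε : ℝ, X ε →L[ℝ] X₀) : Prop :=
  ∀ c : ℝ, 1 < c → ∀ᶠ ε in 𝓝[>] (0:ℝ), ‖L ε‖ ≤ c


lemma abs_inner_defect_le {E F : Type*} [NormedAddCommGroup E] [InnerProductSpace ℝ E]
    [NormedAddCommGroup F] [InnerProductSpace ℝ F]
    (L : E →L[ℝ] F) (c : ℝ) (hLc : ‖L‖ ≤ c) (x y : E) :
    |c^2 * ⟪x, y⟫_ℝ - ⟪L x, L y⟫_ℝ| ≤
      Real.sqrt (c^2 * ‖x‖^2 - ‖L x‖^2) * Real.sqrt (c^2 * ‖y‖^2 - ‖L y‖^2) := by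
  have hB : ∀ z : E, 0 ≤ c^2 * ‖z‖^2 - ‖L z‖^2 := by
    intro z
    have h := L.le_opNorm z
    have hz : ‖L z‖ ≤ c * ‖z‖ := h.trans (mul_le_mul_of_nonneg_right hLc (norm_nonneg z))
    nlinarith [norm_nonneg (L z), norm_nonneg z]
  have key : (c^2 * ⟪x, y⟫_ℝ - ⟪L x, L y⟫_ℝ)^2
      ≤ (c^2 * ‖x‖^2 - ‖L x‖^2) * (c^2 * ‖y‖^2 - ‖L y‖^2) := by
    have hq : ∀ t : ℝ, 0 ≤ (c^2 * ‖y‖^2 - ‖L y‖^2) * (t*t)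
        + (2*(c^2 * ⟪x, y⟫_ℝ - ⟪L x, L y⟫_ℝ)) * t + (c^2 * ‖x‖^2 - ‖L x‖^2) := by
      intro t
      have h0 := hB (x + t • y)
      have e1 : ‖x + t • y‖^2 = ‖x‖^2 + 2*(t*⟪x,y⟫_ℝ) + t^2*‖y‖^2 := by
        rw [norm_add_sq_real, real_inner_smul_right, norm_smul]
        simp [mul_pow, sq_abs]
      have e2 : ‖L (x + t • y)‖^2 = ‖L x‖^2 + 2*(t*⟪L x, L y⟫_ℝ) + t^2*‖L y‖^2 := by
        rw [map_add, map_smul, norm_add_sq_real, real_inner_smul_right, norm_smul]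
        simp [mul_pow, sq_abs]
      rw [e1, e2] at h0
      nlinarith [h0]
    have hd := discrim_le_zero hq
    rw [discrim] at hd
    nlinarith [hd]
  calc |c^2 * ⟪x, y⟫_ℝ - ⟪L x, L y⟫_ℝ|
      = Real.sqrt ((c^2 * ⟪x, y⟫_ℝ - ⟪L x, L y⟫_ℝ)^2) := (Real.sqrt_sq_eq_abs _).symm
    _ ≤ Real.sqrt ((c^2 * ‖x‖^2 - ‖L x‖^2) * (c^2 * ‖y‖^2 - ‖L y‖^2)) := Real.sqrt_le_sqrt key
    _ = _ := Real.sqrt_mul (hB x) _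


set_option maxHeartbeats 1000000 in
/-- If the connecting operators are asymptotically contractive, if `w ε` converges strongly
along `L ε` to `w₀` and `v ε` converges weakly along `L ε` to `v₀`, then the inner products
`⟪w ε, v ε⟫` converge to `⟪w₀, v₀⟫`. -/
theorem inner_tendsto_of_strongAlong_of_weakAlong
    (L : ∀ ε : ℝ, X ε →L[ℝ] X₀) (hL : AsympContractive L)
    (w v : ∀ ε : ℝ, X ε) (w₀ v₀ : X₀)
    (hw : StrongAlong L w w₀) (hv : WeakAlong L v v₀) :
    Tendsto (fun ε => ⟪w ε, v ε⟫_ℝ) (𝓝[>] (0:ℝ)) (𝓝 ⟪w₀, v₀⟫_ℝ) := by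
  set l := 𝓝[>] (0:ℝ) with hl
  obtain ⟨C, hC⟩ := hv.1
  set D : ℝ := max C 1 with hDdef
  have hD1 : (1:ℝ) ≤ D := le_max_right _ _
  have hD0 : (0:ℝ) < D := lt_of_lt_of_le one_pos hD1
  have hvD : ∀ᶠ ε in l, ‖v ε‖ ≤ D := hC.mono fun ε h => h.trans (le_max_left _ _)
  have hLw : Tendsto (fun ε => ‖L ε (w ε)‖) l (𝓝 ‖w₀‖) := hw.2.norm
  -- step 1 : ⟪L w, L v⟫ → ⟪w₀, v₀⟫
  have hp : Tendsto (fun ε => ⟪L ε (w ε), L ε (v ε)⟫_ℝ) l (𝓝 ⟪w₀, v₀⟫_ℝ) := by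
    have h2 : Tendsto (fun ε => ⟪L ε (v ε), L ε (w ε) - w₀⟫_ℝ) l (𝓝 0) := by
      have hbd : ∀ᶠ ε in l, ‖⟪L ε (v ε), L ε (w ε) - w₀⟫_ℝ‖ ≤ (2*D) * ‖L ε (w ε) - w₀‖ := by
        filter_upwards [hvD, hL 2 one_lt_two] with ε h1 h2
        calc ‖⟪L ε (v ε), L ε (w ε) - w₀⟫_ℝ‖
            ≤ ‖L ε (v ε)‖ * ‖L ε (w ε) - w₀‖ := norm_inner_le_norm _ _
          _ ≤ (2*D) * ‖L ε (w ε) - w₀‖ := by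
              apply mul_le_mul_of_nonneg_right _ (norm_nonneg _)
              calc ‖L ε (v ε)‖ ≤ ‖L ε‖ * ‖v ε‖ := (L ε).le_opNorm _
                _ ≤ 2 * D := mul_le_mul h2 h1 (norm_nonneg _) (by norm_num)
      have hsub : Tendsto (fun ε => L ε (w ε) - w₀) l (𝓝 0) := by
        simpa using hw.2.sub_const w₀
      have hg : Tendsto (fun ε => (2*D) * ‖L ε (w ε) - w₀‖) l (𝓝 0) := by
        simpa using (hsub.norm).const_mul (2*D)
      exact squeeze_zero_norm' hbd hg
    have h1 : Tendsto (fun ε => ⟪L ε (v ε), w₀⟫_ℝ) l (𝓝 ⟪v₀, w₀⟫_ℝ) := hv.2 w₀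
    have hsum := h1.add h2
    rw [add_zero] at hsum
    have heq : (fun ε => ⟪L ε (w ε), L ε (v ε)⟫_ℝ)
        = fun ε => ⟪L ε (v ε), w₀⟫_ℝ + ⟪L ε (v ε), L ε (w ε) - w₀⟫_ℝ := by
      funext ε
      rw [← inner_add_right, add_sub_cancel, real_inner_comm]
    have hcomm : ⟪w₀, v₀⟫_ℝ = ⟪v₀, w₀⟫_ℝ := real_inner_comm _ _
    rw [heq, hcomm]
    exact hsum
  -- main ε-δ argument
  rw [Metric.tendsto_nhds]
  intro η hη
  set I := ⟪w₀, v₀⟫_ℝ with hIdef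
  set W := ‖w₀‖^2 + 1 with hWdef
  have hW : 0 < W := by positivity
  set δ : ℝ := min 1 (min (η/(3*(|I|+1))) ((η/(6*D))^2/(2*W))) with hδdef
  have hδ0 : 0 < δ := by
    refine lt_min one_pos (lt_min (by positivity) (by positivity))
  have hδ1 : δ ≤ 1 := min_le_left _ _
  set c : ℝ := Real.sqrt (1+δ) with hcdef
  have hc2 : c^2 = 1+δ := Real.sq_sqrt (by linarith)
  have hc1 : 1 < c := by
    have : (1:ℝ) < 1 + δ := by linarith
    nlinarith [Real.sqrt_nonneg (1+δ), hc2]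
  have hc0 : (0:ℝ) < c := lt_trans one_pos hc1
  have hLc : ∀ᶠ ε in l, ‖L ε‖ ≤ c := hL c hc1
  have ht : Tendsto (fun ε => c^2*‖w ε‖^2 - ‖L ε (w ε)‖^2) l (𝓝 (δ*‖w₀‖^2)) := by
    have h1 := (hw.1.pow 2).const_mul (c^2)
    have h2 := hLw.pow 2
    have h3 := h1.sub h2
    have : c^2 * ‖w₀‖^2 - ‖w₀‖^2 = δ*‖w₀‖^2 := by rw [hc2]; ring
    rwa [this] at h3
  have hdef : ∀ᶠ ε in l, c^2*‖w ε‖^2 - ‖L ε (w ε)‖^2 ≤ δ*W := by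
    apply ht.eventually_le_const
    rw [hWdef]; nlinarith [sq_nonneg ‖w₀‖]
  have hpnear : ∀ᶠ ε in l, |⟪L ε (w ε), L ε (v ε)⟫_ℝ - I| < η/3 := by
    have h := Metric.tendsto_nhds.1 hp (η/3) (by positivity)
    simpa [Real.dist_eq] using h
  filter_upwards [hLc, hvD, hdef, hpnear] with ε h1 h2 h3 h4
  set p := ⟪L ε (w ε), L ε (v ε)⟫_ℝ with hpdef
  set s := ⟪w ε, v ε⟫_ℝ with hsdef
  have hB := abs_inner_defect_le (L ε) c h1 (w ε) (v ε)
  have hs1 : Real.sqrt (c^2*‖w ε‖^2 - ‖L ε (w ε)‖^2) ≤ η/(6*D) := by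
    have hrw : η/(6*D) = Real.sqrt ((η/(6*D))^2) := (Real.sqrt_sq (by positivity)).symm
    rw [hrw]
    apply Real.sqrt_le_sqrt
    have hδle : δ ≤ (η/(6*D))^2/(2*W) := le_trans (min_le_right _ _) (min_le_right _ _)
    calc c^2*‖w ε‖^2 - ‖L ε (w ε)‖^2 ≤ δ*W := h3
      _ ≤ ((η/(6*D))^2/(2*W))*W := mul_le_mul_of_nonneg_right hδle hW.le
      _ ≤ (η/(6*D))^2 := by
          rw [div_mul_eq_mul_div, mul_comm (2:ℝ) W, ← div_div, mul_div_assoc]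
          rw [div_self hW.ne', mul_one]
          have : (0:ℝ) ≤ (η/(6*D))^2 := by positivity
          linarith [half_le_self this]
  have hs2 : Real.sqrt (c^2*‖v ε‖^2 - ‖L ε (v ε)‖^2) ≤ 2*D := by
    have hrw : 2*D = Real.sqrt ((2*D)^2) := (Real.sqrt_sq (by positivity)).symm
    rw [hrw]
    apply Real.sqrt_le_sqrt
    have hvn : ‖v ε‖^2 ≤ D^2 := by nlinarith [norm_nonneg (v ε)]
    nlinarith [sq_nonneg ‖L ε (v ε)‖, hδ0, hδ1, hvn]
  have hBb : |c^2 * s - p| ≤ η/3 := by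
    calc |c^2 * s - p| ≤ _ := hB
      _ ≤ (η/(6*D)) * (2*D) := mul_le_mul hs1 hs2 (Real.sqrt_nonneg _) (by positivity)
      _ = η/3 := by field_simp; ring
  have hδI : δ*|I| < η/3 := by
    have hδle : δ ≤ η/(3*(|I|+1)) := le_trans (min_le_right _ _) (min_le_left _ _)
    have h5 : δ*|I| ≤ (η/(3*(|I|+1)))*|I| := mul_le_mul_of_nonneg_right hδle (abs_nonneg I)
    have h6 : (η/(3*(|I|+1)))*|I| < η/3 := by
      rw [div_mul_eq_mul_div, div_lt_div_iff₀ (by positivity) (by norm_num)]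
      nlinarith [abs_nonneg I]
    linarith
  have hdecomp : s - I = ((c^2*s - p) + (p - I) + (1 - c^2)*I)/c^2 := by
    field_simp
    ring
  have hfin : |s - I| ≤ |c^2*s - p| + |p - I| + δ*|I| := by
    rw [hdecomp, abs_div]
    have hle : |(c^2*s - p) + (p - I) + (1 - c^2)*I| ≤ |c^2*s - p| + |p - I| + δ*|I| := by
      have hab : |(1 - c^2)*I| = δ*|I| := by
        rw [abs_mul]
        congr 1
        rw [hc2]
        rw [show (1:ℝ) - (1+δ) = -δ by ring, abs_neg, abs_of_pos hδ0]
      calc |(c^2*s - p) + (p - I) + (1 - c^2)*I|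
          ≤ |(c^2*s - p) + (p - I)| + |(1 - c^2)*I| := abs_add_le _ _
        _ ≤ |c^2*s - p| + |p - I| + |(1 - c^2)*I| := by linarith [abs_add_le (c^2*s - p) (p - I)]
        _ = |c^2*s - p| + |p - I| + δ*|I| := by rw [hab]
    have h1c : (1:ℝ) ≤ |c^2| := by rw [abs_of_pos (by positivity)]; rw [hc2]; linarith
    calc |(c^2*s - p) + (p - I) + (1 - c^2)*I| / |c^2|
        ≤ |(c^2*s - p) + (p - I) + (1 - c^2)*I| := div_le_self (abs_nonneg _) h1c
      _ ≤ _ := hle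
  rw [Real.dist_eq]
  calc |s - I| ≤ |c^2*s - p| + |p - I| + δ*|I| := hfin
    _ < η/3 + η/3 + η/3 := by
        apply add_lt_add_of_le_of_lt (add_le_add hBb h4.le) hδI  -- need strict somewhere
    _ = η := by ring
end
end

section
/- Suppose the family of connecting operators (L_ε) is asymptotically contractive (condition (H1)), and let L_ε* : X_0 → X_ε denote the Hilbert-space adjoint of L_ε. Whenever a family (w^ε), w^ε ∈ X_ε, converges strongly along L_ε to some w ∈ X_0, one has ‖L_ε* L_ε w^ε − w^ε‖_{X_ε} → 0 as ε → 0⁺. -/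
open Filter Topology
open scoped InnerProductSpace

noncomputable section

variable {X : ℝ → Type*} [∀ ε, NormedAddCommGroup (X ε)] [∀ ε, InnerProductSpace ℝ (X ε)]
variable {X₀ : Type*} [NormedAddCommGroup X₀] [InnerProductSpace ℝ X₀]

/-- If the connecting operators are asymptotically contractive and `w ε` converges strongly
along `L ε` to some `w₀ ∈ X₀`, then `‖(L ε)* (L ε (w ε)) - w ε‖ → 0` as `ε → 0⁺`, where
`(L ε)*` denotes the Hilbert-space adjoint of `L ε`. -/
theorem adjoint_comp_sub_tendsto_zero
    [∀ ε, CompleteSpace (X ε)] [CompleteSpace X₀]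
    (L : ∀ ε : ℝ, X ε →L[ℝ] X₀) (hL : AsympContractive L)
    (w : ∀ ε : ℝ, X ε) (w₀ : X₀) (hw : StrongAlong L w w₀) :
    Tendsto (fun ε => ‖ContinuousLinearMap.adjoint (L ε) (L ε (w ε)) - w ε‖)
      (𝓝[>] (0:ℝ)) (𝓝 0) := by
  have ha : Tendsto (fun ε => ‖L ε (w ε)‖) (𝓝[>] (0:ℝ)) (𝓝 ‖w₀‖) :=
    (continuous_norm.tendsto _).comp hw.2
  rw [NormedAddCommGroup.tendsto_nhds_zero]
  intro δ hδ
  set c : ℝ := Real.sqrt (1 + δ^2 / (2 * (‖w₀‖^2 + 1))) with hc_def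
  have hpos : (0:ℝ) < ‖w₀‖^2 + 1 := by positivity
  have hc1 : 1 < c := by
    rw [hc_def, show (1:ℝ) < Real.sqrt (1 + δ^2 / (2 * (‖w₀‖^2 + 1))) ↔
      (1:ℝ)^2 < 1 + δ^2 / (2 * (‖w₀‖^2 + 1)) from Real.lt_sqrt (by norm_num)]
    have : 0 < δ^2 / (2 * (‖w₀‖^2 + 1)) := by positivity
    nlinarith
  have hcsq : c^2 = 1 + δ^2 / (2 * (‖w₀‖^2 + 1)) := by
    rw [hc_def]; exact Real.sq_sqrt (by positivity)
  -- the limit of the upper bound is strictly below δ^2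
  have hlim : Tendsto (fun ε => c^2 * ‖L ε (w ε)‖^2 - 2 * ‖L ε (w ε)‖^2 + ‖w ε‖^2)
      (𝓝[>] (0:ℝ)) (𝓝 (c^2 * ‖w₀‖^2 - 2 * ‖w₀‖^2 + ‖w₀‖^2)) := by
    exact (((ha.pow 2).const_mul _).sub ((ha.pow 2).const_mul _)).add (hw.1.pow 2)
  have hval : c^2 * ‖w₀‖^2 - 2 * ‖w₀‖^2 + ‖w₀‖^2 < δ^2 := by
    have h1 : c^2 * ‖w₀‖^2 - 2 * ‖w₀‖^2 + ‖w₀‖^2 = (c^2 - 1) * ‖w₀‖^2 := by ring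
    rw [h1, hcsq]
    have h2 : (1 + δ^2 / (2 * (‖w₀‖^2 + 1)) - 1) * ‖w₀‖^2
        = δ^2 * (‖w₀‖^2 / (2 * (‖w₀‖^2 + 1))) := by ring
    rw [h2]
    have h3 : ‖w₀‖^2 / (2 * (‖w₀‖^2 + 1)) < 1 := by
      rw [div_lt_one (by positivity)]; nlinarith [sq_nonneg ‖w₀‖]
    have := mul_lt_mul_of_pos_left h3 (pow_pos hδ 2)
    simpa using this
  have hev := (hlim.eventually_lt_const hval).and (hL c hc1)
  filter_upwards [hev] with ε hε
  obtain ⟨hε1, hε2⟩ := hε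
  have hbound : ‖ContinuousLinearMap.adjoint (L ε) (L ε (w ε)) - w ε‖^2
      ≤ c^2 * ‖L ε (w ε)‖^2 - 2 * ‖L ε (w ε)‖^2 + ‖w ε‖^2 := by
    have hexp : ‖ContinuousLinearMap.adjoint (L ε) (L ε (w ε)) - w ε‖^2
        = ‖ContinuousLinearMap.adjoint (L ε) (L ε (w ε))‖^2
          - 2 * ‖L ε (w ε)‖^2 + ‖w ε‖^2 := by
      rw [@norm_sub_sq_real, ContinuousLinearMap.adjoint_inner_left,
        real_inner_self_eq_norm_sq]
    rw [hexp]
    have hadj : ‖ContinuousLinearMap.adjoint (L ε) (L ε (w ε))‖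
        ≤ c * ‖L ε (w ε)‖ := by
      calc ‖ContinuousLinearMap.adjoint (L ε) (L ε (w ε))‖
          ≤ ‖ContinuousLinearMap.adjoint (L ε)‖ * ‖L ε (w ε)‖ :=
            (ContinuousLinearMap.adjoint (L ε)).le_opNorm _
        _ ≤ c * ‖L ε (w ε)‖ := by
            apply mul_le_mul_of_nonneg_right _ (norm_nonneg _)
            rw [LinearIsometryEquiv.norm_map]; exact hε2
    nlinarith [norm_nonneg (ContinuousLinearMap.adjoint (L ε) (L ε (w ε))),
      norm_nonneg (L ε (w ε)), mul_le_mul_of_nonneg_left hadj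
        (norm_nonneg (ContinuousLinearMap.adjoint (L ε) (L ε (w ε))))]
  have hsq : ‖ContinuousLinearMap.adjoint (L ε) (L ε (w ε)) - w ε‖^2 < δ^2 :=
    lt_of_le_of_lt hbound hε1
  have := lt_of_pow_lt_pow_left₀ 2 (le_of_lt hδ) hsq
  simpa using this
end
end

section
/- Let n ≥ 1 and N ≥ 3 be integers and let V = (ℤ/Nℤ)^n be the discretized torus. For every z ∈ V and every i ∈ {1,…,n}, the number of pairs (z₀, σ) ∈ V × Sym(n) such that both z and z + e_i (mod N) belong to the vertex set { z₀ + v_k^σ mod N : k = 0, …, n } of the simplex indexed by (z₀, σ) equals n!. -/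
/-- The `k`-th vertex `v_k^σ` of the simplex `Σ_σ`, viewed in the discretized torus
`(ℤ/Nℤ)^n`: it has coordinate `1` exactly at the positions `σ(n), σ(n-1), …, σ(n-k+1)`
(`1`-indexed), equivalently at those `j` with `n - k ≤ σ⁻¹(j)` (`0`-indexed). -/
def simplexVertexZ (N n : ℕ) (σ : Equiv.Perm (Fin n)) (k : ℕ) : Fin n → ZMod N :=
  fun j => if n - k ≤ (σ.symm j : ℕ) then 1 else 0

lemma vertex_step (N n : ℕ) (hn : 1 ≤ n) (σ : Equiv.Perm (Fin n)) (i : Fin n) :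
    simplexVertexZ N n σ (n - 1 - (σ.symm i : ℕ) + 1)
      = simplexVertexZ N n σ (n - 1 - (σ.symm i : ℕ)) + Pi.single i 1 := by
  funext j
  have hs : (σ.symm i : ℕ) < n := (σ.symm i).isLt
  have ht : (σ.symm j : ℕ) < n := (σ.symm j).isLt
  have hji : (j = i) ↔ ((σ.symm j : ℕ) = (σ.symm i : ℕ)) := by
    constructor
    · rintro rfl; rfl
    · intro h; exact σ.symm.injective (Fin.ext h)
  simp only [simplexVertexZ, Pi.add_apply, Pi.single_apply]
  rw [if_congr hji rfl rfl]
  split_ifs <;> first | omega | norm_num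

lemma vertex_step_unique (N n : ℕ) (hN : 3 ≤ N) (σ : Equiv.Perm (Fin n)) (i : Fin n)
    (a b : ℕ) (ha : a ≤ n) (hb : b ≤ n)
    (h : simplexVertexZ N n σ b = simplexVertexZ N n σ a + Pi.single i 1) :
    a = n - 1 - (σ.symm i : ℕ) := by
  haveI : Fact (1 < N) := ⟨by omega⟩
  have h2 : (2 : ZMod N) ≠ 0 := by
    intro h0
    have : (N : ℕ) ∣ 2 := by
      have := (ZMod.natCast_eq_zero_iff 2 N).mp (by push_cast; exact h0)
      exact this
    have := Nat.le_of_dvd (by norm_num) this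
    omega
  set s : ℕ := (σ.symm i : ℕ) with hsdef
  have hs : s < n := (σ.symm i).isLt
  have hi := congrFun h i
  simp only [simplexVertexZ, Pi.add_apply, Pi.single_apply, eq_self_iff_true, if_true] at hi
  by_cases hbs : n - b ≤ s <;> by_cases has : n - a ≤ s
  · rw [if_pos hbs, if_pos has] at hi
    exact absurd (by linear_combination -hi : (1 : ZMod N) = 0) one_ne_zero
  · -- good case
    rw [if_pos hbs, if_neg has] at hi
    have hlt : s < n - a := lt_of_not_ge has
    by_cases hcase : a + s + 2 ≤ n
    · exfalso
      have hsn : s + 1 < n := by omega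
      set j := σ ⟨s + 1, hsn⟩ with hjdef
      have hsj : (σ.symm j : ℕ) = s + 1 := by
        rw [hjdef, Equiv.symm_apply_apply]
      have hji : j ≠ i := by
        intro hji
        have h3 : σ.symm j = σ.symm i := by rw [hji]
        have h4 : (σ.symm j : ℕ) = (σ.symm i : ℕ) := congrArg Fin.val h3
        omega
      have hj := congrFun h j
      simp only [simplexVertexZ, Pi.add_apply, Pi.single_apply, if_neg hji, hsj,
        add_zero] at hj
      have hb1 : n - b ≤ s + 1 := by omega
      have ha1 : ¬ (n - a ≤ s + 1) := by omega
      rw [if_pos hb1, if_neg ha1] at hj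
      exact one_ne_zero hj
    · omega
  · rw [if_neg hbs, if_pos has] at hi
    exact absurd (by linear_combination -hi : (2 : ZMod N) = 0) h2
  · rw [if_neg hbs, if_neg has] at hi
    exact absurd (by linear_combination hi : (0 : ZMod N) = 1) (by norm_num)

/-- In the standard simplicial decomposition of the discretized torus `V = (ℤ/Nℤ)^n`
(simplices indexed by pairs `(z₀, σ) ∈ V × Sym(n)`, with vertex set
`{z₀ + v_k^σ : k = 0, …, n}`), for every node `z` and coordinate direction `i`, exactly `n!`
simplices contain both `z` and `z + eᵢ` among their vertices. -/
theorem card_simplices_containing_edge (n N : ℕ) (hn : 1 ≤ n) (hN : 3 ≤ N)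
    (z : Fin n → ZMod N) (i : Fin n) :
    Nat.card {p : (Fin n → ZMod N) × Equiv.Perm (Fin n) //
        (∃ k ≤ n, z = p.1 + simplexVertexZ N n p.2 k) ∧
        (∃ k ≤ n, z + Pi.single i 1 = p.1 + simplexVertexZ N n p.2 k)} = Nat.factorial n := by
  classical
  set T := {p : (Fin n → ZMod N) × Equiv.Perm (Fin n) //
        (∃ k ≤ n, z = p.1 + simplexVertexZ N n p.2 k) ∧
        (∃ k ≤ n, z + Pi.single i 1 = p.1 + simplexVertexZ N n p.2 k)} with hT
  let f : Equiv.Perm (Fin n) → T := fun σ =>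
    ⟨(z - simplexVertexZ N n σ (n - 1 - (σ.symm i : ℕ)), σ),
      ⟨n - 1 - (σ.symm i : ℕ), by
        have := (σ.symm i).isLt; omega, by ring⟩,
      ⟨n - 1 - (σ.symm i : ℕ) + 1, by
        have := (σ.symm i).isLt; omega, by
        rw [vertex_step N n hn σ i]; ring⟩⟩
  have hbij : Function.Bijective f := by
    constructor
    · intro σ₁ σ₂ hf
      exact congrArg (fun x => x.1.2) hf
    · rintro ⟨⟨z₀, σ⟩, ⟨a, ha, hza⟩, ⟨b, hb, hzb⟩⟩
      refine ⟨σ, Subtype.ext ?_⟩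
      have hstep : simplexVertexZ N n σ b = simplexVertexZ N n σ a + Pi.single i 1 := by
        have h' : z₀ + (simplexVertexZ N n σ a + Pi.single i 1)
            = z₀ + simplexVertexZ N n σ b := by
          rw [← add_assoc, ← hza, hzb]
        exact (add_left_cancel h').symm
      have haeq : a = n - 1 - (σ.symm i : ℕ) :=
        vertex_step_unique N n hN σ i a b ha hb hstep
      have : z - simplexVertexZ N n σ (n - 1 - (σ.symm i : ℕ)) = z₀ := by
        rw [← haeq, hza]; ring
      simp only [f, this]
  have := Nat.card_eq_of_bijective f hbij
  rw [← this, Nat.card_eq_fintype_card, Fintype.card_perm, Fintype.card_fin]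
end

section
/- Let n ≥ 1, let σ ∈ Sym(n), and let f : ℝ^n → ℝ be the unique affine function with prescribed values f(v_j^σ) = c_j, j = 0,…,n, at the vertices v_0^σ,…,v_n^σ of the simplex Σ_σ. Then the Lebesgue integral ∫_{Σ_σ} f(x)² dx ≤ (1/(n+1)!) · Σ_{j=0}^n c_j². -/
open MeasureTheory

noncomputable section

/-- The closed simplex `Σ_σ = { x ∈ ℝ^n : 0 ≤ x_{σ(1)} ≤ x_{σ(2)} ≤ … ≤ x_{σ(n)} ≤ 1 }`
of the standard simplicial decomposition of the unit cube. -/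
def simplexSet (n : ℕ) (σ : Equiv.Perm (Fin n)) : Set (Fin n → ℝ) :=
  {x | (∀ i, x i ∈ Set.Icc (0:ℝ) 1) ∧ ∀ i j : Fin n, i ≤ j → x (σ i) ≤ x (σ j)}

/-- The `k`-th vertex `v_k^σ ∈ {0,1}^n` of the simplex `Σ_σ`: it has coordinate `1` exactly at
the positions `σ(n), σ(n-1), …, σ(n-k+1)` (`1`-indexed), equivalently at those `j` with
`n - k ≤ σ⁻¹(j)` (`0`-indexed). -/
def simplexVertex (n : ℕ) (σ : Equiv.Perm (Fin n)) (k : ℕ) : Fin n → ℝ :=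
  fun j => if n - k ≤ (σ.symm j : ℕ) then 1 else 0

/-!
On `Σ_σ` the barycentric coordinates with respect to `v_0, …, v_n` are affine, so
`f = ∑ λ_j c_j` with `λ_j ≥ 0`, `∑ λ_j = 1`, and convexity of `t ↦ t²` gives
`f² ≤ ∑ λ_j c_j²` pointwise. The linear map `u ↦ ∑ u_k v_{k+1}` has determinant `±1` and carries
the solid simplex `{u ≥ 0, ∑ u ≤ 1}` onto `Σ_σ`, turning the `λ_j` into the weights
`(1 - ∑ u, u_0, …, u_{n-1})`. All weights have the same integral `vol / (n + 1)`: the affine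
involution `u ↦ update u k (1 - ∑ u)` preserves the solid simplex and exchanges `u_k` with
`1 - ∑ u`. Finally `vol ≤ 1 / n!`, because the `n!` simplices `Σ_τ` all have this volume, meet only
in hyperplanes `x_p = x_q` and lie in the unit cube.
-/

open Finset

section ChangeOfVariables

variable {E : Type*} [NormedAddCommGroup E] [NormedSpace ℝ E] [MeasurableSpace E] [BorelSpace E]
  [FiniteDimensional ℝ E]

theorem LinearMap.measurePreserving_of_abs_det_eq_one (μ : Measure E) [μ.IsAddHaarMeasure]
    {f : E →ₗ[ℝ] E} (hf : |LinearMap.det f| = 1) : MeasurePreserving f μ μ := by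
  have hdet : LinearMap.det f ≠ 0 := by rintro h; simp [h] at hf
  refine ⟨f.continuous_of_finiteDimensional.measurable, ?_⟩
  rw [Measure.map_linearMap_addHaar_eq_smul_addHaar μ hdet, abs_inv, hf]
  simp

theorem LinearMap.measurableEmbedding_of_det_ne_zero {f : E →ₗ[ℝ] E}
    (hf : LinearMap.det f ≠ 0) : MeasurableEmbedding f := by
  have hbij := (Module.End.isUnit_iff f).mp (f.isUnit_iff_isUnit_det.mpr hf.isUnit)
  exact (f.isClosedEmbedding_of_injective (LinearMap.ker_eq_bot.mpr hbij.1)).measurableEmbedding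

theorem LinearMap.measure_preimage_of_abs_det_eq_one (μ : Measure E) [μ.IsAddHaarMeasure]
    {f : E →ₗ[ℝ] E} (hf : |LinearMap.det f| = 1) (s : Set E) : μ (f ⁻¹' s) = μ s := by
  have hdet : LinearMap.det f ≠ 0 := by rintro h; simp [h] at hf
  simp [Measure.addHaar_preimage_linearMap μ hdet, abs_inv, hf]

theorem LinearMap.setIntegral_preimage_of_abs_det_eq_one {F : Type*} [NormedAddCommGroup F]
    [NormedSpace ℝ F] (μ : Measure E) [μ.IsAddHaarMeasure] {f : E →ₗ[ℝ] E}
    (hf : |LinearMap.det f| = 1) (g : E → F) (s : Set E) :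
    ∫ x in f ⁻¹' s, g (f x) ∂μ = ∫ y in s, g y ∂μ := by
  have hdet : LinearMap.det f ≠ 0 := by rintro h; simp [h] at hf
  exact (f.measurePreserving_of_abs_det_eq_one μ hf).setIntegral_preimage_emb
    (f.measurableEmbedding_of_det_ne_zero hdet) g s

theorem AffineMap.measurePreserving_of_involutive (μ : Measure E) [μ.IsAddHaarMeasure]
    {T : E →ᵃ[ℝ] E} (hT : Function.Involutive T) : MeasurePreserving T μ μ := by
  have hsq : T.linear ∘ₗ T.linear = LinearMap.id := by
    ext x
    have h := congrArg AffineMap.linear (AffineMap.ext hT : T.comp T = AffineMap.id ℝ E)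
    exact LinearMap.congr_fun h x
  have hdet : |LinearMap.det T.linear| = 1 := by
    have h := congrArg LinearMap.det hsq
    rw [LinearMap.det_comp, LinearMap.det_id] at h
    rcases mul_self_eq_one_iff.mp h with h | h <;> simp [h]
  rw [T.decomp]
  exact (measurePreserving_add_right μ (T 0)).comp
    (T.linear.measurePreserving_of_abs_det_eq_one μ hdet)

theorem AffineMap.measurableEmbedding_of_involutive {T : E →ᵃ[ℝ] E}
    (hT : Function.Involutive T) : MeasurableEmbedding T :=
  let hT' : Measurable T := T.continuous_of_finiteDimensional.measurable
  (MeasurableEquiv.mk (hT.toPerm T) hT' hT').measurableEmbedding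

end ChangeOfVariables

theorem AffineMap.map_sum_smul_of_sum_eq_one {k V₁ V₂ ι : Type*} [Ring k] [AddCommGroup V₁]
    [Module k V₁] [AddCommGroup V₂] [Module k V₂] (f : V₁ →ᵃ[k] V₂) (s : Finset ι)
    (p : ι → V₁) {w : ι → k} (hw : ∑ i ∈ s, w i = 1) :
    f (∑ i ∈ s, w i • p i) = ∑ i ∈ s, w i • f (p i) := by
  rw [← s.affineCombination_eq_linear_combination p w hw, s.map_affineCombination p w hw,
    s.affineCombination_eq_linear_combination _ w hw]
  rfl

theorem sq_sum_mul_le_sum_mul_sq {ι : Type*} (s : Finset ι) {w : ι → ℝ} (a : ι → ℝ)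
    (hw : ∀ i ∈ s, 0 ≤ w i) (hw₁ : ∑ i ∈ s, w i = 1) :
    (∑ i ∈ s, w i * a i) ^ 2 ≤ ∑ i ∈ s, w i * a i ^ 2 := by
  simpa using (even_two.convexOn_pow (𝕜 := ℝ)).map_sum_le hw hw₁ fun i _ => Set.mem_univ (a i)

def solidSimplex (ι : Type*) [Fintype ι] : Set (ι → ℝ) :=
  {u | (∀ i, 0 ≤ u i) ∧ ∑ i, u i ≤ 1}

section SolidSimplex

variable {ι : Type*} [Fintype ι]

theorem isCompact_solidSimplex : IsCompact (solidSimplex ι) := by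
  have hclosed : IsClosed (solidSimplex ι) := by
    simp only [solidSimplex, Set.ofPred_and, Set.ofPred_forall]
    exact (isClosed_iInter fun i => isClosed_le continuous_const (continuous_apply i)).inter
      (isClosed_le (continuous_finsetSum _ fun i _ => continuous_apply i) continuous_const)
  refine (isCompact_Icc (a := 0) (b := 1)).of_isClosed_subset hclosed
    fun u ⟨hu, hsum⟩ => ⟨hu, fun i => ?_⟩
  exact (single_le_sum (fun j _ => hu j) (mem_univ i)).trans hsum

theorem comp_equiv_mem_solidSimplex_iff (e : ι ≃ ι) {u : ι → ℝ} :
    u ∘ e ∈ solidSimplex ι ↔ u ∈ solidSimplex ι := by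
  simp only [solidSimplex, Set.mem_ofPred_eq, Function.comp_apply,
    e.forall_congr_right (q := fun i => 0 ≤ u i), e.sum_comp u]

theorem mem_solidSimplex_iff_partialSums [LinearOrder ι] [LocallyFiniteOrderBot ι] [PredOrder ι]
    {u : ι → ℝ} : u ∈ solidSimplex ι ↔
      (∀ i, ∑ k ∈ Iic i, u k ∈ Set.Icc 0 1) ∧ Monotone fun i => ∑ k ∈ Iic i, u k := by
  constructor
  · rintro ⟨hu, hsum⟩
    refine ⟨fun i => ⟨sum_nonneg fun k _ => hu k, ?_⟩, fun i j hij => ?_⟩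
    · exact (sum_le_sum_of_subset_of_nonneg (subset_univ _) fun k _ _ => hu k).trans hsum
    · exact sum_le_sum_of_subset_of_nonneg (Iic_subset_Iic.mpr hij) fun k _ _ => hu k
  · rintro ⟨hIcc, hmono⟩
    have hu : ∀ k, 0 ≤ u k := by
      intro k
      have hk : ∑ j ∈ Iic k, u j = u k + ∑ j ∈ Iio k, u j := by
        rw [Iic_eq_cons_Iio, sum_cons]
      by_cases hmin : IsMin k
      · simpa [hk, Iio_eq_empty.mpr hmin] using (hIcc k).1
      · rw [← Iic_pred_eq_Iio_of_not_isMin hmin] at hk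
        linarith [hmono (Order.pred_le k)]
    refine ⟨hu, ?_⟩
    rcases isEmpty_or_nonempty ι with hι | hι
    · simp
    · obtain ⟨m, hm⟩ := Finite.exists_max (id : ι → ι)
      have : Iic m = univ := eq_univ_of_forall fun k => mem_Iic.mpr (hm k)
      simpa [this] using (hIcc m).2

variable [DecidableEq ι]

def solidSimplexReflection (k : ι) : (ι → ℝ) →ᵃ[ℝ] (ι → ℝ) where
  toFun u := Function.update u k (1 - ∑ i, u i)
  linear := LinearMap.pi fun j => if j = k then -∑ i, LinearMap.proj i else LinearMap.proj j
  map_vadd' u v := by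
    ext j
    by_cases hj : j = k
    · subst hj; simp [sum_add_distrib]; ring
    · simp [hj]

theorem solidSimplexReflection_apply (k : ι) (u : ι → ℝ) :
    solidSimplexReflection k u = Function.update u k (1 - ∑ i, u i) := rfl

theorem sum_solidSimplexReflection (k : ι) (u : ι → ℝ) :
    ∑ i, solidSimplexReflection k u i = 1 - u k := by
  rw [solidSimplexReflection_apply, sum_update_of_mem (mem_univ k),
    ← add_sum_erase _ _ (mem_univ k), sdiff_singleton_eq_erase]
  ring

theorem solidSimplexReflection_involutive (k : ι) :
    Function.Involutive (solidSimplexReflection k) := fun u => by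
  rw [solidSimplexReflection_apply _ (solidSimplexReflection k u), sum_solidSimplexReflection,
    solidSimplexReflection_apply, Function.update_idem, sub_sub_cancel, Function.update_eq_self]

theorem preimage_solidSimplexReflection (k : ι) :
    solidSimplexReflection k ⁻¹' solidSimplex ι = solidSimplex ι := by
  have hmaps : ∀ u ∈ solidSimplex ι, solidSimplexReflection k u ∈ solidSimplex ι := by
    rintro u ⟨hu, hsum⟩
    refine ⟨fun i => ?_, by linarith [sum_solidSimplexReflection k u, hu k]⟩
    rw [solidSimplexReflection_apply, Function.update_apply]
    split_ifs
    exacts [sub_nonneg.mpr hsum, hu i]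
  ext u
  refine ⟨fun hu => ?_, hmaps u⟩
  simpa [solidSimplexReflection_involutive k u] using hmaps _ hu

theorem setIntegral_solidSimplex_apply_eq_one_sub_sum (k : ι) :
    ∫ u in solidSimplex ι, u k = ∫ u in solidSimplex ι, (1 - ∑ i, u i) := by
  have hT := solidSimplexReflection_involutive k
  rw [← (AffineMap.measurePreserving_of_involutive volume hT).setIntegral_preimage_emb
    (AffineMap.measurableEmbedding_of_involutive hT) (fun v => 1 - ∑ i, v i),
    preimage_solidSimplexReflection]
  simp only [sum_solidSimplexReflection, sub_sub_cancel]

end SolidSimplex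

section SimplexWeights

variable {n : ℕ}

def simplexWeights (u : Fin n → ℝ) : Fin (n + 1) → ℝ :=
  Fin.cons (1 - ∑ i, u i) u

theorem sum_simplexWeights (u : Fin n → ℝ) : ∑ k, simplexWeights u k = 1 := by
  simp [simplexWeights, Fin.sum_univ_succ]

theorem simplexWeights_nonneg {u : Fin n → ℝ} (hu : u ∈ solidSimplex (Fin n)) (k : Fin (n + 1)) :
    0 ≤ simplexWeights u k :=
  Fin.cases (sub_nonneg.mpr hu.2) hu.1 k

theorem continuous_simplexWeights (k : Fin (n + 1)) :
    Continuous fun u : Fin n → ℝ => simplexWeights u k := by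
  refine Fin.cases ?_ (fun i => continuous_apply i) k
  exact continuous_const.sub (continuous_finsetSum _ fun i _ => continuous_apply i)

theorem setIntegral_simplexWeights (k : Fin (n + 1)) :
    ∫ u in solidSimplex (Fin n), simplexWeights u k =
      volume.real (solidSimplex (Fin n)) / (n + 1) := by
  set S := solidSimplex (Fin n)
  have hequal : ∀ k, ∫ u in S, simplexWeights u k = ∫ u in S, simplexWeights u 0 :=
    fun k => Fin.cases rfl (fun i => setIntegral_solidSimplex_apply_eq_one_sub_sum i) k
  have htotal : ∑ k, ∫ u in S, simplexWeights u k = volume.real S := by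
    rw [← integral_finsetSum _ fun k _ =>
      (continuous_simplexWeights k).continuousOn.integrableOn_compact isCompact_solidSimplex]
    simp [S, sum_simplexWeights]
  simp only [hequal, sum_const, card_univ, Fintype.card_fin, nsmul_eq_mul] at htotal
  rw [hequal, ← htotal]
  field_simp
  push_cast
  ring

theorem setIntegral_sq_sum_simplexWeights_mul_le (c : Fin (n + 1) → ℝ) :
    ∫ u in solidSimplex (Fin n), (∑ k, simplexWeights u k * c k) ^ 2 ≤
      volume.real (solidSimplex (Fin n)) / (n + 1) * ∑ k, c k ^ 2 := by
  have hint : ∀ k, IntegrableOn (fun u => simplexWeights u k * c k ^ 2) (solidSimplex (Fin n)) :=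
    fun k => ((continuous_simplexWeights k).mul continuous_const).continuousOn.integrableOn_compact
      isCompact_solidSimplex
  calc ∫ u in solidSimplex (Fin n), (∑ k, simplexWeights u k * c k) ^ 2
      ≤ ∫ u in solidSimplex (Fin n), ∑ k, simplexWeights u k * c k ^ 2 := by
        refine setIntegral_mono_on ?_ (integrable_finsetSum _ fun k _ => hint k)
          isCompact_solidSimplex.isClosed.measurableSet fun u hu =>
            sq_sum_mul_le_sum_mul_sq _ c (fun k _ => simplexWeights_nonneg hu k)
              (sum_simplexWeights u)
        exact (continuous_finsetSum _ fun k _ => (continuous_simplexWeights k).mul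
          continuous_const).pow 2 |>.continuousOn.integrableOn_compact isCompact_solidSimplex
    _ = volume.real (solidSimplex (Fin n)) / (n + 1) * ∑ k, c k ^ 2 := by
        rw [integral_finsetSum _ fun k _ => hint k, mul_sum]
        simp only [integral_mul_const, setIntegral_simplexWeights]

end SimplexWeights

section SimplexChart

open Matrix

variable {n : ℕ} (σ : Equiv.Perm (Fin n))

def simplexChart : Matrix (Fin n) (Fin n) ℝ :=
  Matrix.of fun j k => simplexVertex n σ (k + 1) j

theorem simplexChart_apply (j k : Fin n) :
    simplexChart σ j k = simplexVertex n σ (k + 1) j := rfl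

theorem simplexChart_eq_submatrix : simplexChart σ =
    (Matrix.of fun i k : Fin n => if k ≤ i then (1 : ℝ) else 0).submatrix σ.symm Fin.revPerm := by
  refine Matrix.ext fun j k => ?_
  rw [simplexChart_apply, Matrix.submatrix_apply, Matrix.of_apply]
  simp only [simplexVertex, Fin.revPerm_apply, Fin.le_def, Fin.val_rev]

theorem abs_det_simplexChart : |(simplexChart σ).det| = 1 := by
  rw [simplexChart_eq_submatrix, Matrix.abs_det_submatrix_equiv_equiv,
    Matrix.det_of_isLowerTriangular]
  · simp
  · intro i k (hik : i < k)
    simp [not_le.mpr hik]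

theorem abs_det_toLin'_simplexChart : |LinearMap.det (toLin' (simplexChart σ))| = 1 := by
  rw [LinearMap.det_toLin', abs_det_simplexChart]

theorem simplexChart_mulVec_apply (u : Fin n → ℝ) (i : Fin n) :
    (simplexChart σ *ᵥ u) (σ i) = ∑ k ∈ Iic i, u (Fin.rev k) := by
  simp only [mulVec, dotProduct, simplexChart_eq_submatrix]
  rw [← Equiv.sum_comp Fin.revPerm]
  simp [Finset.sum_ite, filter_ge_eq_Iic]

theorem simplexChart_mulVec (u : Fin n → ℝ) :
    simplexChart σ *ᵥ u = ∑ k, simplexWeights u k • simplexVertex n σ k := by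
  ext j
  simp [Fin.sum_univ_succ, simplexWeights, simplexChart_apply, simplexVertex, mulVec, dotProduct,
    mul_comm]

theorem preimage_simplexSet :
    Matrix.toLin' (simplexChart σ) ⁻¹' simplexSet n σ = solidSimplex (Fin n) := by
  ext u
  have hx : ∀ i, (simplexChart σ *ᵥ u) (σ i) = ∑ k ∈ Iic i, (u ∘ Fin.revPerm) k :=
    simplexChart_mulVec_apply σ u
  rw [Set.mem_preimage, Matrix.toLin'_apply, ← comp_equiv_mem_solidSimplex_iff Fin.revPerm,
    mem_solidSimplex_iff_partialSums, simplexSet, Set.mem_ofPred_eq, ← σ.forall_congr_right]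
  simp only [hx]
  rfl

end SimplexChart

section Volume

open scoped ENNReal

theorem volume_setOf_apply_eq_apply {ι : Type*} [Fintype ι] {p q : ι} (hpq : p ≠ q) :
    volume {x : ι → ℝ | x p = x q} = 0 := by
  classical
  have hker : {x : ι → ℝ | x p = x q} =
      LinearMap.ker (LinearMap.proj (R := ℝ) (φ := fun _ : ι => ℝ) p - LinearMap.proj q) := by
    ext x
    simp [sub_eq_zero]
  rw [hker]
  refine Measure.addHaar_submodule _ _ fun htop => ?_
  have h := htop ▸ Submodule.mem_top (x := Pi.single p (1 : ℝ))
  simp [hpq.symm] at h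

theorem isClosed_simplexSet (n : ℕ) (σ : Equiv.Perm (Fin n)) : IsClosed (simplexSet n σ) := by
  simp only [simplexSet, Set.ofPred_and, Set.ofPred_forall]
  exact (isClosed_iInter fun i => isClosed_Icc.preimage (continuous_apply i)).inter
    (isClosed_iInter fun i => isClosed_iInter fun j => isClosed_iInter fun _ =>
      isClosed_le (continuous_apply _) (continuous_apply _))

theorem aedisjoint_simplexSet {n : ℕ} {σ τ : Equiv.Perm (Fin n)} (hστ : σ ≠ τ) :
    AEDisjoint volume (simplexSet n σ) (simplexSet n τ) := by
  obtain ⟨a, b, hab, hba⟩ : ∃ a b, a ≤ b ∧ τ.symm (σ b) < τ.symm (σ a) := by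
    by_contra! h
    have hmono : StrictMono (τ.symm ∘ σ) := Monotone.strictMono_of_injective
      (fun a b hab => h a b hab) (τ.symm.injective.comp σ.injective)
    exact hστ (Equiv.ext fun i => by simpa using congrArg τ (congrFun hmono.eq_id i))
  have hne : σ a ≠ σ b := fun h => hba.ne (by rw [h])
  refine measure_mono_null (fun x ⟨hxσ, hxτ⟩ => ?_) (volume_setOf_apply_eq_apply hne)
  have := hxτ.2 _ _ hba.le
  simp only [Equiv.apply_symm_apply] at this
  exact le_antisymm (hxσ.2 a b hab) this

theorem volume_simplexSet {n : ℕ} (σ : Equiv.Perm (Fin n)) :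
    volume (simplexSet n σ) = volume (solidSimplex (Fin n)) := by
  rw [← preimage_simplexSet σ, LinearMap.measure_preimage_of_abs_det_eq_one volume
    (abs_det_toLin'_simplexChart σ)]

theorem factorial_mul_volume_solidSimplex_le (n : ℕ) :
    (n.factorial : ℝ≥0∞) * volume (solidSimplex (Fin n)) ≤ 1 := by
  calc (n.factorial : ℝ≥0∞) * volume (solidSimplex (Fin n))
      = ∑ σ : Equiv.Perm (Fin n), volume (simplexSet n σ) := by
        simp [volume_simplexSet, Fintype.card_perm]
    _ = volume (⋃ σ : Equiv.Perm (Fin n), simplexSet n σ) := by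
        rw [measure_iUnion₀ (fun σ τ h => aedisjoint_simplexSet h)
          fun σ => (isClosed_simplexSet n σ).measurableSet.nullMeasurableSet, tsum_fintype]
    _ ≤ volume (Set.Icc (0 : Fin n → ℝ) 1) :=
        measure_mono <| Set.iUnion_subset fun σ x hx => ⟨fun i => (hx.1 i).1, fun i => (hx.1 i).2⟩
    _ = 1 := by simp [Real.volume_Icc_pi]

end Volume

theorem integral_sq_affine_interpolation_le_general (n : ℕ) (σ : Equiv.Perm (Fin n))
    (c : Fin (n + 1) → ℝ) (f : (Fin n → ℝ) →ᵃ[ℝ] ℝ)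
    (hf : ∀ i : Fin (n + 1), f (simplexVertex n σ (i : ℕ)) = c i) :
    ∫ x in simplexSet n σ, (f x) ^ 2
      ≤ (1 / (Nat.factorial (n + 1) : ℝ)) * ∑ i : Fin (n + 1), (c i) ^ 2 := by
  have hf_chart : ∀ u, f ((simplexChart σ).mulVec u) = ∑ k, simplexWeights u k * c k := fun u => by
    simp [simplexChart_mulVec, f.map_sum_smul_of_sum_eq_one _ _ (sum_simplexWeights u), hf]
  have hvol : volume.real (solidSimplex (Fin n)) ≤ (n.factorial : ℝ)⁻¹ := by
    have h := ENNReal.le_inv_iff_mul_le.mpr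
      ((mul_comm _ _).trans_le (factorial_mul_volume_solidSimplex_le n))
    rw [measureReal_def]
    simpa using ENNReal.toReal_mono (by simp [Nat.factorial_ne_zero]) h
  calc ∫ x in simplexSet n σ, f x ^ 2
      = ∫ u in solidSimplex (Fin n), (∑ k, simplexWeights u k * c k) ^ 2 := by
        rw [← preimage_simplexSet σ, ← LinearMap.setIntegral_preimage_of_abs_det_eq_one volume
          (abs_det_toLin'_simplexChart σ)]
        simp [hf_chart]
    _ ≤ volume.real (solidSimplex (Fin n)) / (n + 1) * ∑ k, c k ^ 2 :=
        setIntegral_sq_sum_simplexWeights_mul_le c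
    _ ≤ (n.factorial : ℝ)⁻¹ / (n + 1) * ∑ k, c k ^ 2 := by gcongr
    _ = 1 / ((n + 1).factorial : ℝ) * ∑ k, c k ^ 2 := by
        rw [Nat.factorial_succ]
        push_cast
        field_simp

/-- If `f` is the affine function with values `f(v_j^σ) = c_j` at the vertices of the simplex
`Σ_σ`, then `∫_{Σ_σ} f² ≤ (1/(n+1)!) Σ_j c_j²`. -/
theorem integral_sq_affine_interpolation_le (n : ℕ) (hn : 1 ≤ n) (σ : Equiv.Perm (Fin n))
    (c : Fin (n + 1) → ℝ) (f : (Fin n → ℝ) →ᵃ[ℝ] ℝ)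
    (hf : ∀ i : Fin (n + 1), f (simplexVertex n σ (i : ℕ)) = c i) :
    ∫ x in simplexSet n σ, (f x) ^ 2
      ≤ (1 / (Nat.factorial (n + 1) : ℝ)) * ∑ i : Fin (n + 1), (c i) ^ 2 :=
  integral_sq_affine_interpolation_le_general n σ c f hf
end
end
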